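/- Let p be a prime and let R be a discrete valuation ring of characteristic p whose residue field is finite with q elements. Let 1 ≤ n ≤ m be integers, set W := (1+𝔪)/(1+𝔪^m), and let V ⊆ W be the image of the subgroup 1+𝔪^n in W. Then the quotient V/(V ∩ W^p) is a finite group of order q^{(m − ⌈m/p⌉) − (n − ⌈n/p⌉)}. -/

import Mathlib

/-!
Write `U_k = 1 + 𝔪^k` and `a = ⌈n/p⌉`, `b = ⌈m/p⌉`. Since `U_m ≤ U_n`, pulling back along
`U_1 → W` identifies `V/(V ∩ Wᵖ)` with `U_n/(U_n ∩ U_1ᵖ U_m)`. In characteristic `p`,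
`(1 + x)ᵖ = 1 + xᵖ`, so `uᵖ ∈ U_j ↔ u ∈ U_⌈j/p⌉`; by the modular law this gives
`U_n ∩ U_1ᵖ U_m = U_aᵖ U_m`, and the `p`-th power map induces `U_a/U_b ≃ U_aᵖ U_m/U_m`.
Each `U_c/U_{c+1}` (`c ≥ 1`) is isomorphic to the residue field via `r ↦ 1 + r ϖ^c`, so
`[U_n : U_aᵖ U_m] = [U_n : U_m] / [U_a : U_b] = q^((m - n) - (b - a))`.
-/

open IsLocalRing Subgroup

namespace Ideal

variable {R : Type*} [CommRing R] {I J : Ideal R}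

def oneAddUnits (I : Ideal R) : Subgroup Rˣ :=
  (Units.map (Ideal.Quotient.mk I : R →* R ⧸ I)).ker

theorem mem_oneAddUnits {u : Rˣ} : u ∈ I.oneAddUnits ↔ (u : R) - 1 ∈ I := by
  rw [oneAddUnits, MonoidHom.mem_ker, Units.ext_iff, ← Ideal.Quotient.eq]
  simp

theorem inv_mul_mem_oneAddUnits_iff {u v : Rˣ} :
    u⁻¹ * v ∈ I.oneAddUnits ↔ (v : R) - u ∈ I := by
  rw [oneAddUnits, MonoidHom.mem_ker, map_mul, map_inv, inv_mul_eq_one, Units.ext_iff,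
    Units.coe_map, Units.coe_map, eq_comm]
  exact Ideal.Quotient.eq

theorem oneAddUnits_mono (h : I ≤ J) : I.oneAddUnits ≤ J.oneAddUnits :=
  fun _ hu => mem_oneAddUnits.2 (h (mem_oneAddUnits.1 hu))

theorem oneAddUnits_pow_antitone (I : Ideal R) : Antitone fun k : ℕ => (I ^ k).oneAddUnits :=
  fun _ _ h => oneAddUnits_mono (Ideal.pow_le_pow_right h)

end Ideal

theorem IsLocalRing.isUnit_one_add {R : Type*} [CommRing R] [IsLocalRing R] {x : R}
    (hx : x ∈ maximalIdeal R) : IsUnit (1 + x) := by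
  simpa using isUnit_one_sub_self_of_mem_nonunits (-x) (neg_mem hx)

namespace Subgroup

section Group

variable {G N : Type*} [Group G] [Group N]

theorem inf_sup_assoc_of_le_of_normal {A C : Subgroup G} (B : Subgroup G) [C.Normal]
    (h : C ≤ A) : A ⊓ (B ⊔ C) = (A ⊓ B) ⊔ C := by
  apply SetLike.coe_injective
  rw [coe_inf, mul_normal, mul_normal, inf_mul_assoc _ _ _ h]

theorem map_inf_eq_map_inf_comap (f : G →* N) (A : Subgroup G) (B : Subgroup N) :
    map f A ⊓ B = map f (A ⊓ comap f B) :=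
  SetLike.coe_injective (by simp [Set.image_inter_preimage])

end Group

variable {G : Type*} [CommGroup G]

theorem range_powMonoidHom_eq_map_of_surjective {N : Type*} [CommGroup N] {f : G →* N}
    (hf : Function.Surjective f) (n : ℕ) :
    (powMonoidHom (α := N) n).range = (powMonoidHom (α := G) n).range.map f := by
  have H : f.comp (powMonoidHom n) = (powMonoidHom n).comp f := by ext; simp
  rw [MonoidHom.map_range, H, MonoidHom.range_comp, MonoidHom.range_eq_top.2 hf,
    ← MonoidHom.range_eq_map]

theorem relIndex_range_powMonoidHom_map_mk_subgroupOf {H K A : Subgroup G} (hK : K ≤ H)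
    (hA : A ≤ H) (n : ℕ) :
    (powMonoidHom (α := H ⧸ K.subgroupOf H) n).range.relIndex
        (map (QuotientGroup.mk' (K.subgroupOf H)) (A.subgroupOf H)) =
      (map (powMonoidHom n) H ⊔ K).relIndex A := by
  have hpow : map (powMonoidHom n) H ≤ H := by
    rintro _ ⟨x, hx, rfl⟩
    exact pow_mem hx n
  rw [range_powMonoidHom_eq_map_of_surjective (QuotientGroup.mk'_surjective _),
    ← relIndex_comap, comap_map_eq, QuotientGroup.ker_mk',
    ← subgroupOf_map_powMonoidHom_eq_range, ← subgroupOf_sup hpow hK, relIndex_subgroupOf hA]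

end Subgroup

theorem Nat.ceilDiv_pos {p n : ℕ} (hp : 0 < p) (hn : n ≠ 0) : 0 < n ⌈/⌉ p :=
  Nat.div_pos (by omega) hp

section DiscreteValuationRing

variable {R : Type*} [CommRing R] [IsDomain R] [IsDiscreteValuationRing R]

theorem Irreducible.mul_pow_mem_maximalIdeal_pow {ϖ : R} (hϖ : Irreducible ϖ) (r : R) (c : ℕ) :
    r * ϖ ^ c ∈ maximalIdeal R ^ c := by
  rw [hϖ.maximalIdeal_eq, Ideal.span_singleton_pow]
  exact Ideal.mul_mem_left _ _ (Ideal.mem_span_singleton_self _)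

theorem Irreducible.mul_pow_mem_maximalIdeal_pow_succ_iff {ϖ : R} (hϖ : Irreducible ϖ) (r : R)
    (c : ℕ) : r * ϖ ^ c ∈ maximalIdeal R ^ (c + 1) ↔ r ∈ maximalIdeal R := by
  rw [hϖ.maximalIdeal_eq, Ideal.span_singleton_pow, Ideal.mem_span_singleton,
    Ideal.mem_span_singleton, pow_succ', mul_dvd_mul_iff_right (pow_ne_zero c hϖ.ne_zero)]

theorem Irreducible.unit_mul_pow_mem_maximalIdeal_pow_iff {ϖ : R} (hϖ : Irreducible ϖ) (u : Rˣ)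
    (s j : ℕ) : (u : R) * ϖ ^ s ∈ maximalIdeal R ^ j ↔ j ≤ s := by
  rw [hϖ.maximalIdeal_eq, Ideal.span_singleton_pow, Ideal.mem_span_singleton,
    Units.dvd_mul_left, pow_dvd_pow_iff hϖ.ne_zero hϖ.not_isUnit]

theorem pow_mem_maximalIdeal_pow_iff {k : ℕ} (hk : 0 < k) (x : R) (j : ℕ) :
    x ^ k ∈ maximalIdeal R ^ j ↔ x ∈ maximalIdeal R ^ (j ⌈/⌉ k) := by
  rcases eq_or_ne x 0 with rfl | hx
  · simp [zero_pow hk.ne']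
  obtain ⟨ϖ, hϖ⟩ := IsDiscreteValuationRing.exists_irreducible R
  obtain ⟨s, u, rfl⟩ := IsDiscreteValuationRing.eq_unit_mul_pow_irreducible hx hϖ
  rw [mul_pow, ← Units.val_pow_eq_pow_val, ← pow_mul, hϖ.unit_mul_pow_mem_maximalIdeal_pow_iff,
    hϖ.unit_mul_pow_mem_maximalIdeal_pow_iff, ceilDiv_le_iff_le_mul hk, mul_comm]

theorem relIndex_oneAddUnits_pow_succ {c : ℕ} (hc : c ≠ 0) :
    (maximalIdeal R ^ (c + 1)).oneAddUnits.relIndex (maximalIdeal R ^ c).oneAddUnits =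
      Nat.card (ResidueField R) := by
  obtain ⟨ϖ, hϖ⟩ := IsDiscreteValuationRing.exists_irreducible R
  set U := (maximalIdeal R ^ c).oneAddUnits
  set N := (maximalIdeal R ^ (c + 1)).oneAddUnits.subgroupOf U
  have hmax (r : R) : r * ϖ ^ c ∈ maximalIdeal R :=
    Ideal.pow_le_self hc (hϖ.mul_pow_mem_maximalIdeal_pow r c)
  let g (r : R) : U := ⟨(isUnit_one_add (hmax r)).unit,
    Ideal.mem_oneAddUnits.2 (by simpa using hϖ.mul_pow_mem_maximalIdeal_pow r c)⟩
  have hg (r : R) : ((g r : Rˣ) : R) = 1 + r * ϖ ^ c := rfl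
  have hmk (r : R) (u : U) : (QuotientGroup.mk (g r) : U ⧸ N) = QuotientGroup.mk u ↔
      ((u : Rˣ) : R) - (1 + r * ϖ ^ c) ∈ maximalIdeal R ^ (c + 1) := by
    rw [QuotientGroup.eq, mem_subgroupOf, coe_mul, coe_inv, Ideal.inv_mul_mem_oneAddUnits_iff, hg]
  let φ : R →+ Additive (U ⧸ N) :=
    AddMonoidHom.mk' (fun r => Additive.ofMul (QuotientGroup.mk (g r) : U ⧸ N)) fun r s => by
      rw [← ofMul_mul, ← QuotientGroup.mk_mul, Additive.ofMul.apply_eq_iff_eq, hmk, coe_mul,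
        Units.val_mul, hg, hg,
        show (1 + r * ϖ ^ c) * (1 + s * ϖ ^ c) - (1 + (r + s) * ϖ ^ c) =
          r * (s * ϖ ^ c) * ϖ ^ c by ring,
        hϖ.mul_pow_mem_maximalIdeal_pow_succ_iff]
      exact Ideal.mul_mem_left _ _ (hmax s)
  have hφ : Function.Surjective φ := by
    rintro ⟨u⟩
    obtain ⟨r, hr⟩ := Ideal.mem_span_singleton'.1 (by
      simpa [hϖ.maximalIdeal_eq, Ideal.span_singleton_pow] using Ideal.mem_oneAddUnits.1 u.2)
    exact ⟨r, congrArg Additive.ofMul ((hmk r u).2 (by rw [hr]; simp))⟩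
  have hker : φ.ker = (maximalIdeal R).toAddSubgroup := by
    ext r
    rw [AddMonoidHom.mem_ker, Submodule.mem_toAddSubgroup,
      ← hϖ.mul_pow_mem_maximalIdeal_pow_succ_iff r c]
    change Additive.ofMul _ = Additive.ofMul 1 ↔ _
    rw [Additive.ofMul.apply_eq_iff_eq, QuotientGroup.eq_one_iff, mem_subgroupOf,
      Ideal.mem_oneAddUnits, hg, add_sub_cancel_left]
  have hcard := Nat.card_congr (QuotientAddGroup.quotientKerEquivOfSurjective
    (H := Additive (U ⧸ N)) φ hφ).toEquiv
  rw [hker] at hcard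
  exact hcard.symm

theorem relIndex_oneAddUnits_pow {c d : ℕ} (hc : c ≠ 0) (hcd : c ≤ d) :
    (maximalIdeal R ^ d).oneAddUnits.relIndex (maximalIdeal R ^ c).oneAddUnits =
      Nat.card (ResidueField R) ^ (d - c) := by
  obtain ⟨j, rfl⟩ := Nat.exists_eq_add_of_le hcd
  induction j with
  | zero => simp
  | succ j ih =>
    rw [← relIndex_mul_relIndex _ (maximalIdeal R ^ (c + j)).oneAddUnits _
        ((maximalIdeal R).oneAddUnits_pow_antitone (by omega))
        ((maximalIdeal R).oneAddUnits_pow_antitone (by omega)),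
      ← add_assoc, relIndex_oneAddUnits_pow_succ (by omega), ih (by omega),
      show c + j + 1 - c = c + j - c + 1 by omega, pow_succ']

section CharP

variable (p : ℕ) [Fact p.Prime] [CharP R p] {n m : ℕ}

theorem comap_powMonoidHom_oneAddUnits (j : ℕ) :
    comap (powMonoidHom p) (maximalIdeal R ^ j).oneAddUnits =
      (maximalIdeal R ^ (j ⌈/⌉ p)).oneAddUnits := by
  ext u
  have hfrob : ((u ^ p : Rˣ) : R) - 1 = ((u : R) - 1) ^ p := by
    rw [sub_pow_char, one_pow, Units.val_pow_eq_pow_val]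
  rw [mem_comap, powMonoidHom_apply, Ideal.mem_oneAddUnits, hfrob,
    pow_mem_maximalIdeal_pow_iff (Fact.out : p.Prime).pos, Ideal.mem_oneAddUnits]

theorem oneAddUnits_inf_map_powMonoidHom_sup (hn : n ≠ 0) (hnm : n ≤ m) :
    (maximalIdeal R ^ n).oneAddUnits ⊓
        (map (powMonoidHom p) (maximalIdeal R ^ 1).oneAddUnits ⊔
          (maximalIdeal R ^ m).oneAddUnits) =
      map (powMonoidHom p) (maximalIdeal R ^ (n ⌈/⌉ p)).oneAddUnits ⊔
        (maximalIdeal R ^ m).oneAddUnits := by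
  rw [inf_sup_assoc_of_le_of_normal _ ((maximalIdeal R).oneAddUnits_pow_antitone hnm),
    inf_comm, map_inf_eq_map_inf_comap, comap_powMonoidHom_oneAddUnits, inf_of_le_right
      ((maximalIdeal R).oneAddUnits_pow_antitone (Nat.ceilDiv_pos (Fact.out : p.Prime).pos hn))]

theorem relIndex_map_powMonoidHom_sup_oneAddUnits [Finite (ResidueField R)] (hn : n ≠ 0)
    (hnm : n ≤ m) :
    (map (powMonoidHom p) (maximalIdeal R ^ 1).oneAddUnits ⊔
        (maximalIdeal R ^ m).oneAddUnits).relIndex (maximalIdeal R ^ n).oneAddUnits =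
      Nat.card (ResidueField R) ^ ((m - m ⌈/⌉ p) - (n - n ⌈/⌉ p)) := by
  have hp : 0 < p := (Fact.out : p.Prime).pos
  have hab : n ⌈/⌉ p ≤ m ⌈/⌉ p := (gc_mul_ceilDiv hp).monotone_l hnm
  have han : n ⌈/⌉ p ≤ n := (ceilDiv_le_iff_le_mul hp).2 (Nat.le_mul_of_pos_left n hp)
  have hbm : m ⌈/⌉ p ≤ m := (ceilDiv_le_iff_le_mul hp).2 (Nat.le_mul_of_pos_left m hp)
  have hba : m ⌈/⌉ p ≤ n ⌈/⌉ p + (m - n) := by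
    have := le_smul_ceilDiv (b := n) hp
    have := Nat.le_mul_of_pos_left (m - n) hp
    rw [ceilDiv_le_iff_le_mul hp, mul_add]
    simp only [smul_eq_mul] at *
    omega
  have hY := oneAddUnits_inf_map_powMonoidHom_sup (R := R) p hn hnm
  set Y := map (powMonoidHom p) (maximalIdeal R ^ (n ⌈/⌉ p)).oneAddUnits ⊔
    (maximalIdeal R ^ m).oneAddUnits
  have hmY : (maximalIdeal R ^ m).oneAddUnits.relIndex Y =
      Nat.card (ResidueField R) ^ (m ⌈/⌉ p - n ⌈/⌉ p) := by
    rw [relIndex_sup_right, ← relIndex_comap, comap_powMonoidHom_oneAddUnits,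
      relIndex_oneAddUnits_pow (Nat.ceilDiv_pos hp hn).ne' hab]
  have hchain := relIndex_mul_relIndex _ _ _ le_sup_right (hY ▸ inf_le_left)
  rw [hmY, relIndex_oneAddUnits_pow hn hnm] at hchain
  rw [← inf_relIndex_left, hY]
  apply Nat.eq_of_mul_eq_mul_left (pow_pos (Nat.card_pos (α := ResidueField R)) _)
  rw [hchain, ← pow_add]
  congr 1
  omega

end CharP

end DiscreteValuationRing

/-- Let `p` be a prime and `R` a discrete valuation ring of characteristic
`p` with finite residue field of cardinality `q`, and let `1 ≤ n ≤ m`.  With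
`W := (1+𝔪)/(1+𝔪^m)` and `V ⊆ W` the image of `1+𝔪^n` in `W`, the quotient
`V/(V ∩ Wᵖ)` is a finite group of order `q ^ ((m - ⌈m/p⌉) - (n - ⌈n/p⌉))`
(where `⌈a/p⌉ = (a + p - 1) / p`). -/
theorem stmt3 (p : ℕ) (hp : p.Prime) (R : Type*) [CommRing R] [IsDomain R]
    [IsDiscreteValuationRing R] [CharP R p]
    (q : ℕ) (hq : Nat.card (IsLocalRing.ResidueField R) = q)
    (hqfin : Finite (IsLocalRing.ResidueField R))
    (n m : ℕ) (hn : 1 ≤ n) (hnm : n ≤ m) :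
    ∃ U : ℕ → Subgroup Rˣ,
      (∀ k : ℕ, ∀ u : Rˣ, u ∈ U k ↔ (u : R) - 1 ∈ (IsLocalRing.maximalIdeal R) ^ k) ∧
      ∀ V : Subgroup ((U 1) ⧸ ((U m).subgroupOf (U 1))),
        V = Subgroup.map (QuotientGroup.mk' ((U m).subgroupOf (U 1)))
              ((U n).subgroupOf (U 1)) →
        (Finite (V ⧸ ((V ⊓ (powMonoidHom
              (α := (U 1) ⧸ ((U m).subgroupOf (U 1))) p).range).subgroupOf V)) ∧
          Nat.card (V ⧸ ((V ⊓ (powMonoidHom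
              (α := (U 1) ⧸ ((U m).subgroupOf (U 1))) p).range).subgroupOf V))
            = q ^ ((m - (m + p - 1) / p) - (n - (n + p - 1) / p))) := by
  have : Fact p.Prime := ⟨hp⟩
  refine ⟨fun k => (maximalIdeal R ^ k).oneAddUnits, fun k u => Ideal.mem_oneAddUnits, ?_⟩
  intro V hV
  have hmU := (maximalIdeal R).oneAddUnits_pow_antitone (hn.trans hnm)
  have hnU := (maximalIdeal R).oneAddUnits_pow_antitone hn
  have hq0 : q ≠ 0 := hq ▸ Nat.card_pos.ne'
  rw [and_iff_right_of_imp fun h => Nat.finite_of_card_ne_zero (h ▸ pow_ne_zero _ hq0)]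
  -- `j ⌈/⌉ p` unfolds to `(j + p - 1) / p`
  change (V ⊓ _).relIndex V = q ^ ((m - m ⌈/⌉ p) - (n - n ⌈/⌉ p))
  rw [inf_relIndex_left, hV, relIndex_range_powMonoidHom_map_mk_subgroupOf hmU hnU,
    relIndex_map_powMonoidHom_sup_oneAddUnits p (Nat.one_le_iff_ne_zero.1 hn) hnm, hq]
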